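/- For every \epsilon > 0 there exists L > 0 such that for all nonnegative integers n_1, ..., n_q with n_1 + ... + n_q \geq L, there exists j \in \{1, ..., 2q\} such that the fractional part of p_1^{n_1} \cdots p_q^{n_q} \cdot z_j lies in the interval [0, \epsilon]. -/
import Mathlib

set_option maxHeartbeats 1000000 in
lemma aux_fract (P pj : ℕ) (hpj : 2 ≤ pj) (e : ℕ → ℕ) (he : StrictMono e)
    (K : ℕ) (hdvd : ∀ k < K, pj ^ e k ∣ P) :
    ∃ T : ℝ, Int.fract ((P : ℝ) * ∑' k, ((pj : ℝ) ^ e k)⁻¹) = Int.fract T ∧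
      0 ≤ T ∧ T ≤ 2 * P / pj ^ e K := by
  have hpj1 : (1 : ℝ) < pj := by exact_mod_cast (by omega : 1 < pj)
  have hpj0 : (0 : ℝ) < pj := by linarith
  have hinv1 : (pj : ℝ)⁻¹ < 1 := inv_lt_one_of_one_lt₀ hpj1
  have hinv0 : (0 : ℝ) ≤ (pj : ℝ)⁻¹ := by positivity
  set g : ℕ → ℝ := fun k => (P : ℝ) * ((pj : ℝ) ^ e k)⁻¹ with hg
  have hbase : Summable (fun k : ℕ => (P : ℝ) * ((pj : ℝ)⁻¹) ^ k) :=
    (summable_geometric_of_lt_one hinv0 hinv1).mul_left _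
  have hsum : Summable g := by
    refine Summable.of_nonneg_of_le (fun k => by positivity) (fun k => ?_) hbase
    rw [hg]
    simp only [← inv_pow]
    exact mul_le_mul_of_nonneg_left
      (pow_le_pow_of_le_one hinv0 hinv1.le he.le_apply) (by positivity)
  set T : ℝ := ∑' i, g (i + K) with hT
  have hsumT : Summable fun i => g (i + K) := (summable_nat_add_iff K).mpr hsum
  refine ⟨T, ?_, tsum_nonneg fun i => by positivity, ?_⟩
  · have h1 : (P : ℝ) * ∑' k, ((pj : ℝ) ^ e k)⁻¹ = ∑' k, g k := by
      rw [← tsum_mul_left]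
    have h2 : (∑ k ∈ Finset.range K, g k) + T = ∑' k, g k :=
      Summable.sum_add_tsum_nat_add K hsum
    set M : ℕ := ∑ k ∈ Finset.range K, P / pj ^ e k with hM
    have h3 : (∑ k ∈ Finset.range K, g k) = (M : ℝ) := by
      rw [hM, Nat.cast_sum]
      refine Finset.sum_congr rfl fun k hk => ?_
      rw [Nat.cast_div (hdvd k (Finset.mem_range.mp hk)) (by positivity)]
      rw [hg, div_eq_mul_inv, mul_comm]
      push_cast
      ring
    rw [h1, ← h2, h3]
    rw [show ((M : ℝ)) = ((M : ℤ) : ℝ) by push_cast; ring, Int.fract_intCast_add]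
  · have key : ∀ i, e K + i ≤ e (i + K) := by
      intro i
      induction i with
      | zero => simp
      | succ n ih =>
        have := he (show n + K < n + 1 + K by omega)
        omega
    have hb : ∀ i, g (i + K) ≤ (P : ℝ) * ((pj : ℝ) ^ e K)⁻¹ * ((pj : ℝ)⁻¹) ^ i := by
      intro i
      rw [hg, mul_assoc]
      simp only [← inv_pow, ← pow_add]
      exact mul_le_mul_of_nonneg_left
        (pow_le_pow_of_le_one hinv0 hinv1.le (key i)) (by positivity)
    have hsumB : Summable fun i => (P : ℝ) * ((pj : ℝ) ^ e K)⁻¹ * ((pj : ℝ)⁻¹) ^ i :=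
      (summable_geometric_of_lt_one hinv0 hinv1).mul_left _
    have hhalf : (pj : ℝ)⁻¹ ≤ 2⁻¹ :=
      (inv_le_inv₀ hpj0 (by norm_num)).mpr (by exact_mod_cast hpj)
    calc T ≤ ∑' i, (P : ℝ) * ((pj : ℝ) ^ e K)⁻¹ * ((pj : ℝ)⁻¹) ^ i :=
            Summable.tsum_le_tsum hb hsumT hsumB
      _ = (P : ℝ) * ((pj : ℝ) ^ e K)⁻¹ * (1 - (pj : ℝ)⁻¹)⁻¹ := by
            rw [tsum_mul_left, tsum_geometric_of_lt_one hinv0 hinv1]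
      _ ≤ (P : ℝ) * ((pj : ℝ) ^ e K)⁻¹ * 2 := by
            have h12 : (0:ℝ) < 1 - (pj : ℝ)⁻¹ := by
              norm_num at hhalf ⊢; linarith
            have h2 : (1 - (pj : ℝ)⁻¹)⁻¹ ≤ 2 := by
              rw [inv_le_comm₀ h12 (by norm_num)]
              norm_num at hhalf ⊢; linarith
            exact mul_le_mul_of_nonneg_left h2 (by positivity)
      _ = 2 * P / pj ^ e K := by rw [div_eq_mul_inv]; ring

set_option maxHeartbeats 1000000 in
/-- For every `ε > 0` there is `L` such that whenever `∑ n i ≥ L`,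
some coordinate `z j` (among the `2q` numbers `zA`, `zB`) has
`fract (p 1^{n 1} ⋯ p q^{n q} * z j) ∈ [0, ε]`. -/
theorem stmt1 (q : ℕ) (hq : 2 ≤ q) (p : Fin q → ℕ) (hp1 : ∀ i, 1 < p i)
    (hmono : StrictMono p) (N : ℕ)
    (hN : (q : ℝ) * Real.log (p ⟨q - 1, by omega⟩) / Real.log (p ⟨0, by omega⟩) < (N : ℝ))
    (zA zB : Fin q → ℝ)
    (hzA : ∀ i, zA i = ∑' k : ℕ, ((p i : ℝ) ^ (N ^ (2 * (k + 1))))⁻¹)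
    (hzB : ∀ i, zB i = ∑' k : ℕ, ((p i : ℝ) ^ (N ^ (2 * (k + 1) + 1)))⁻¹) :
    ∀ ε > (0 : ℝ), ∃ L : ℕ, 0 < L ∧ ∀ n : Fin q → ℕ, L ≤ ∑ i, n i →
      ∃ j : Fin q,
        Int.fract ((∏ i, (p i : ℝ) ^ (n i)) * zA j) ∈ Set.Icc (0 : ℝ) ε ∨
        Int.fract ((∏ i, (p i : ℝ) ^ (n i)) * zB j) ∈ Set.Icc (0 : ℝ) ε := by
  intro ε hε
  have hq0 : 0 < q := by omega
  set i0 : Fin q := ⟨0, by omega⟩ with hi0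
  set iq : Fin q := ⟨q - 1, by omega⟩ with hiq
  set la := Real.log (p i0) with hla
  set lb := Real.log (p iq) with hlb
  have ha1 : (1 : ℝ) < p i0 := by exact_mod_cast hp1 i0
  have hb1 : (1 : ℝ) < p iq := by exact_mod_cast hp1 iq
  have hla0 : 0 < la := Real.log_pos ha1
  have hple : ∀ i : Fin q, p i ≤ p iq := by
    intro i
    exact hmono.monotone (by rw [Fin.le_def]; simp only [hiq]; omega)
  have hlb0 : la ≤ lb := Real.log_le_log (by linarith) (by exact_mod_cast hple i0)
  have hN' : (q : ℝ) * lb / la < N := hN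
  have hc0 : 0 < (N : ℝ) * la - q * lb := by
    have := (div_lt_iff₀ hla0).mp hN'
    linarith
  set c : ℝ := (N : ℝ) * la - q * lb with hc
  have hN2 : 2 ≤ N := by
    have h2 : (2 : ℝ) ≤ (q : ℝ) * lb / la := by
      rw [le_div_iff₀ hla0]
      have hq2 : (2 : ℝ) ≤ q := by exact_mod_cast hq
      nlinarith
    have h3 : (2 : ℝ) < N := lt_of_le_of_lt h2 hN'
    exact_mod_cast h3.le
  set r : ℝ := Real.exp (-(c / q)) with hr
  have hr0 : 0 ≤ r := Real.exp_nonneg _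
  have hr1 : r < 1 := by
    rw [hr, Real.exp_lt_one_iff]
    have : 0 < c / q := by positivity
    linarith
  set δ : ℝ := min ε (1 / 2) with hδdef
  have hδ0 : 0 < δ := lt_min hε (by norm_num)
  obtain ⟨L0, hL0⟩ := Filter.eventually_atTop.mp
    ((tendsto_pow_atTop_nhds_zero_of_lt_one hr0 hr1).eventually
      (gt_mem_nhds (show (0 : ℝ) < δ / 2 by positivity)))
  refine ⟨max L0 q + 1, by omega, fun n hn => ?_⟩
  set S := ∑ i, n i with hS
  obtain ⟨j, _, hmax⟩ := Finset.exists_max_image Finset.univ n ⟨i0, Finset.mem_univ _⟩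
  have hSq : S ≤ q * n j := by
    calc S = ∑ i, n i := rfl
      _ ≤ ∑ _i : Fin q, n j := Finset.sum_le_sum fun i _ => hmax i (Finset.mem_univ i)
      _ = q * n j := by simp [Finset.sum_const, Finset.card_univ, mul_comm]
  have hnj1 : 1 ≤ n j := by
    rcases Nat.eq_zero_or_pos (n j) with h0 | h1
    · rw [h0, Nat.mul_zero] at hSq; omega
    · exact h1
  set m := Nat.log N (n j) with hm
  have hm1 : N ^ m ≤ n j := Nat.pow_log_le_self N (by omega)
  have hm2 : n j < N ^ (m + 1) := Nat.lt_pow_succ_log_self (by omega) _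
  set K := m / 2 with hK
  set Pn : ℕ := ∏ i, p i ^ n i with hPn
  have hPb : Pn ≤ p iq ^ S := by
    rw [hPn, hS]
    calc ∏ i, p i ^ n i ≤ ∏ i, p iq ^ n i :=
          Finset.prod_le_prod' fun i _ => Nat.pow_le_pow_left (hple i) _
      _ = p iq ^ ∑ i, n i := Finset.prod_pow_eq_pow_sum _ _ _
  have hcast : (∏ i, (p i : ℝ) ^ (n i)) = (Pn : ℝ) := by rw [hPn]; push_cast; rfl
  have hSL0 : L0 ≤ S := le_trans (by omega) hn
  have hrS : r ^ S < δ / 2 := hL0 S hSL0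
  have hexp : ((p iq : ℝ)) ^ S / ((p i0 : ℝ)) ^ (N * n j) ≤ r ^ S := by
    rw [show ((p iq : ℝ)) = Real.exp lb from (Real.exp_log (by linarith)).symm,
        show ((p i0 : ℝ)) = Real.exp la from (Real.exp_log (by linarith)).symm,
        ← Real.exp_nat_mul, ← Real.exp_nat_mul, ← Real.exp_sub,
        hr, ← Real.exp_nat_mul, Real.exp_le_exp]
    have hq' : (0 : ℝ) < q := by exact_mod_cast hq0
    have hSqR : (S : ℝ) ≤ (q : ℝ) * (n j : ℝ) := by exact_mod_cast hSq
    have hNla : 0 ≤ (N : ℝ) * la := by positivity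
    rw [show (S : ℝ) * (-(c / q)) = (-((S : ℝ) * c)) / q by ring, le_div_iff₀ hq']
    push_cast
    rw [hc]
    nlinarith [mul_le_mul_of_nonneg_right hSqR hNla]
  have main : ∀ e : ℕ → ℕ, StrictMono e → (∀ k < K, e k ≤ n j) → e K = N ^ (m + 2) →
      Int.fract ((Pn : ℝ) * ∑' k, ((p j : ℝ) ^ e k)⁻¹) ∈ Set.Icc (0 : ℝ) ε := by
    intro e he hle heK
    have hpj2 : 2 ≤ p j := by have := hp1 j; omega
    obtain ⟨T, hfr, hT0, hTle⟩ := aux_fract Pn (p j) hpj2 e he K (fun k hk => by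
      refine dvd_trans (pow_dvd_pow _ (hle k hk)) ?_
      refine dvd_trans (pow_dvd_pow _ (le_refl (n j))) ?_
      rw [hPn]
      exact Finset.dvd_prod_of_mem (fun i => p i ^ n i) (Finset.mem_univ j))
    have hden : p i0 ^ (N * n j) ≤ p j ^ e K := by
      rw [heK]
      calc p i0 ^ (N * n j) ≤ p j ^ (N * n j) :=
            Nat.pow_le_pow_left (hmono.monotone (by rw [Fin.le_def]; simp [hi0])) _
        _ ≤ p j ^ N ^ (m + 2) := by
            apply Nat.pow_le_pow_right (by omega)
            rw [show N ^ (m + 2) = N * N ^ (m + 1) by ring]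
            exact Nat.mul_le_mul_left N (by omega)
    have h1 : (Pn : ℝ) ≤ (p iq : ℝ) ^ S := by exact_mod_cast hPb
    have h2 : ((p i0 : ℝ)) ^ (N * n j) ≤ (p j : ℝ) ^ e K := by exact_mod_cast hden
    have hTb : T ≤ 2 * r ^ S := by
      have step1 : 2 * (Pn : ℝ) / (p j : ℝ) ^ e K
          ≤ 2 * ((p iq : ℝ) ^ S) / (p i0 : ℝ) ^ (N * n j) := by
        have hd0 : (0 : ℝ) < (p i0 : ℝ) ^ (N * n j) := by positivity
        gcongr
      have step2 : 2 * ((p iq : ℝ) ^ S) / (p i0 : ℝ) ^ (N * n j) ≤ 2 * r ^ S := by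
        rw [mul_div_assoc]
        linarith [hexp]
      calc T ≤ 2 * Pn / (p j : ℝ) ^ e K := hTle
        _ ≤ _ := step1
        _ ≤ _ := step2
    have hTδ : T < δ := by linarith
    have hT1 : T < 1 := by
      have : δ ≤ 1 / 2 := min_le_right _ _
      linarith
    rw [hfr, Int.fract_eq_self.mpr ⟨hT0, hT1⟩]
    exact ⟨hT0, le_of_lt (lt_of_lt_of_le hTδ (min_le_left _ _))⟩
  have hN1 : 1 < N := by omega
  rcases Nat.even_or_odd m with hev | hodd
  · obtain ⟨t, ht⟩ := hev
    have hKt : K = t := by omega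
    refine ⟨j, Or.inl ?_⟩
    rw [hzA j, hcast]
    exact main (fun k => N ^ (2 * (k + 1)))
      (fun x y hxy => Nat.pow_lt_pow_right hN1 (by omega))
      (fun k hk => le_trans (Nat.pow_le_pow_right (by omega) (by omega)) hm1)
      (by show N ^ (2 * (K + 1)) = N ^ (m + 2); congr 1; omega)
  · obtain ⟨t, ht⟩ := hodd
    have hKt : K = t := by omega
    refine ⟨j, Or.inr ?_⟩
    rw [hzB j, hcast]
    exact main (fun k => N ^ (2 * (k + 1) + 1))
      (fun x y hxy => Nat.pow_lt_pow_right hN1 (by omega))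
      (fun k hk => le_trans (Nat.pow_le_pow_right (by omega) (by omega)) hm1)
      (by show N ^ (2 * (K + 1) + 1) = N ^ (m + 2); congr 1; omega)
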